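/- If U is a nonprincipal ultrafilter over ω and X ⊆ ω^ω is U-determined, then there is an infinite set H ⊆ ω such that either every strictly increasing ω-sequence from H is in X, or every strictly increasing ω-sequence from H is in the complement of X. -/
import Mathlib


universe u

namespace UMeas

variable {A : Type u}

/-- The first `n` values of an infinite sequence, as a list. -/
def seg (s : ℕ → A) (n : ℕ) : List A := List.ofFn (fun i : Fin n => s i)

/-- `T` is a `U`-branching tree: a set of finite sequences closed under initial
segments, containing the empty sequence, whose branching sets are in `U`. -/
def IsUTree (U : Ultrafilter A) (T : Set (List A)) : Prop :=
  ([] ∈ T) ∧ (∀ σ ∈ T, ∀ τ : List A, τ <+: σ → τ ∈ T) ∧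
    ∀ σ ∈ T, {a : A | σ ++ [a] ∈ T} ∈ U

/-- The set of infinite branches through `T`. -/
def branches (T : Set (List A)) : Set (ℕ → A) := {s | ∀ n, seg s n ∈ T}

/-- Concatenation `σ⌢s` of a finite sequence with an infinite sequence. -/
def app (σ : List A) (s : ℕ → A) : ℕ → A :=
  fun n => if h : n < σ.length then σ.get ⟨n, h⟩ else s (n - σ.length)

/-- The section `X↾σ = {s | σ⌢s ∈ X}`. -/
def sect (X : Set (ℕ → A)) (σ : List A) : Set (ℕ → A) := {s | app σ s ∈ X}

def ULarge (U : Ultrafilter A) (X : Set (ℕ → A)) : Prop :=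
  ∃ T, IsUTree U T ∧ branches T ⊆ X

def USmall (U : Ultrafilter A) (X : Set (ℕ → A)) : Prop :=
  ∃ T, IsUTree U T ∧ branches T ∩ X = ∅

def UDetermined (U : Ultrafilter A) (X : Set (ℕ → A)) : Prop :=
  ULarge U X ∨ USmall U X

def UNull (U : Ultrafilter A) (X : Set (ℕ → A)) : Prop :=
  ∀ σ : List A, USmall U (sect X σ)

def UMeasurable (U : Ultrafilter A) (X : Set (ℕ → A)) : Prop :=
  ∀ σ : List A, UDetermined U (sect X σ)

end UMeas

namespace UMeasAux

open UMeas

lemma infinite_of_mem {U : Ultrafilter ℕ} (hU : ∀ n : ℕ, U ≠ pure n)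
    {S : Set ℕ} (hS : S ∈ U) : S.Infinite := by
  by_contra h
  rw [Set.not_infinite] at h
  obtain ⟨a, _, ha⟩ := Ultrafilter.eq_pure_of_finite_mem h hS
  exact hU a ha

def nextSet (T : Set (List ℕ)) (L : List ℕ) : Set ℕ :=
  ⋂ σ ∈ {σ : List ℕ | σ.Sublist L ∧ σ ∈ T}, {a | σ ++ [a] ∈ T}

lemma nextSet_mem {U : Ultrafilter ℕ} {T : Set (List ℕ)} (hT : IsUTree U T)
    (L : List ℕ) : nextSet T L ∈ U := by
  have hfin : {σ : List ℕ | σ.Sublist L ∧ σ ∈ T}.Finite :=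
    (L.sublists.finite_toSet).subset (fun σ hσ => (List.mem_sublists).2 hσ.1)
  exact (Filter.biInter_mem hfin).2 (fun σ hσ => hT.2.2 σ hσ.2)

lemma le_foldr_max (L : List ℕ) : ∀ x ∈ L, x ≤ L.foldr max 0 := by
  induction L with
  | nil => simp
  | cons a L ih =>
    intro x hx
    rcases List.mem_cons.1 hx with h | h
    · simp [h]
    · exact le_trans (ih x h) (le_max_right _ _)

noncomputable def chain (f : List ℕ → ℕ) : ℕ → List ℕ
  | 0 => []
  | k + 1 => chain f k ++ [f (chain f k)]

noncomputable def hseq (f : List ℕ → ℕ) (k : ℕ) : ℕ := f (chain f k)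

lemma chain_sublist (f : List ℕ → ℕ) {k m : ℕ} (h : k ≤ m) :
    (chain f k).Sublist (chain f m) := by
  induction m with
  | zero => simp [Nat.le_zero.1 h]
  | succ m ih =>
    rcases Nat.lt_succ_iff_lt_or_eq.1 (Nat.lt_succ_of_le h) with h' | h'
    · exact (ih (Nat.lt_succ_iff.1 h')).trans
        (by simpa [chain] using List.sublist_append_left (chain f m) [f (chain f m)])
    · simp [h']

lemma key (U : Ultrafilter ℕ) (hU : ∀ n : ℕ, U ≠ pure n) (T : Set (List ℕ))
    (hT : IsUTree U T) :
    ∃ H : Set ℕ, H.Infinite ∧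
      ∀ s : ℕ → ℕ, StrictMono s → (∀ n, s n ∈ H) → s ∈ branches T := by
  have hch : ∀ L : List ℕ, ∃ b, b ∈ nextSet T L ∧ ∀ x ∈ L, x < b := by
    intro L
    obtain ⟨b, hb, hb'⟩ :=
      (infinite_of_mem hU (nextSet_mem hT L)).exists_gt (L.foldr max 0)
    exact ⟨b, hb, fun x hx => lt_of_le_of_lt (le_foldr_max L x hx) hb'⟩
  choose f hf1 hf2 using hch
  -- membership of earlier values in later chains
  have hmem : ∀ k m, k < m → hseq f k ∈ chain f m := by
    intro k m h
    have : hseq f k ∈ chain f (k + 1) := by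
      simp [chain, hseq]
    exact (chain_sublist f h).subset this
  have hmono : StrictMono (hseq f) := by
    apply strictMono_nat_of_lt_succ
    intro k
    exact hf2 (chain f (k + 1)) _ (hmem k (k + 1) (Nat.lt_succ_self k))
  refine ⟨Set.range (hseq f), Set.infinite_range_of_injective hmono.injective, ?_⟩
  intro s hs hsH
  choose k hk using hsH
  have hkmono : StrictMono k := by
    intro n m h
    have : hseq f (k n) < hseq f (k m) := by rw [hk, hk]; exact hs h
    exact hmono.lt_iff_lt.1 this
  have seg_succ : ∀ n, seg s (n + 1) = seg s n ++ [s n] := by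
    intro n
    rw [seg, seg, List.ofFn_succ', List.concat_eq_append]
    rfl
  have main : ∀ n, seg s n ∈ T ∧ (seg s n).Sublist (chain f (k n)) := by
    intro n
    induction n with
    | zero => exact ⟨hT.1, by simp [seg]⟩
    | succ n ih =>
      have hin : hseq f (k n) ∈ nextSet T (chain f (k n)) := hf1 (chain f (k n))
      have hstep : seg s n ++ [hseq f (k n)] ∈ T := by
        have := Set.mem_iInter₂.1 hin (seg s n) ⟨ih.2, ih.1⟩
        exact this
      constructor
      · rw [seg_succ, ← hk n]; exact hstep
      · rw [seg_succ, ← hk n]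
        have h1 : (seg s n ++ [hseq f (k n)]).Sublist (chain f (k n + 1)) := by
          have he : chain f (k n + 1) = chain f (k n) ++ [hseq f (k n)] := rfl
          rw [he]
          exact ih.2.append (List.Sublist.refl _)
        exact h1.trans (chain_sublist f (hkmono (Nat.lt_succ_self n)))
  exact fun n => (main n).1

end UMeasAux

theorem stmt10 (U : Ultrafilter ℕ) (hU : ∀ n : ℕ, U ≠ pure n)
    (X : Set (ℕ → ℕ)) (hX : UMeas.UDetermined U X) :
    ∃ H : Set ℕ, H.Infinite ∧
      ((∀ s : ℕ → ℕ, StrictMono s → (∀ n, s n ∈ H) → s ∈ X) ∨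
       (∀ s : ℕ → ℕ, StrictMono s → (∀ n, s n ∈ H) → s ∉ X)) := by
  rcases hX with ⟨T, hT, hTX⟩ | ⟨T, hT, hTX⟩
  · obtain ⟨H, hHinf, hH⟩ := UMeasAux.key U hU T hT
    exact ⟨H, hHinf, Or.inl fun s hs hsH => hTX (hH s hs hsH)⟩
  · obtain ⟨H, hHinf, hH⟩ := UMeasAux.key U hU T hT
    refine ⟨H, hHinf, Or.inr fun s hs hsH hsX => ?_⟩
    exact Set.eq_empty_iff_forall_notMem.1 hTX s ⟨hH s hs hsH, hsX⟩
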